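/- arXiv:1612.01890 — 10 statements merged into one kernel-verified Lean document; each statement's English description precedes it below -/
import Mathlib

section
/- Let G be a bipartite tree on node set D ⊔ N where |D| = k+1 and |N| = k for a positive integer k. If every node in N has degree 2 in G, then for each i ∈ D, the graph G with node i deleted contains a perfect matching on (D \ {i}) ⊔ N. -/
/-!
Root the tree at `i`. Every vertex `v ≠ i` has a unique parent, its neighbour one step closer to
`i`, and its other neighbours are exactly its children. A vertex of `N` has degree `2`, hence
exactly one child, which lies in `D`; so `parent` is a bijection from `D \ {i}` onto `N`, and the
edges between a vertex of `D \ {i}` and its parent form the required matching.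
-/

open Finset

namespace SimpleGraph

variable {V : Type*} {G : SimpleGraph V} {r v w : V}

lemma Connected.exists_adj_dist_eq_add_one (hG : G.Connected) (hv : v ≠ r) :
    ∃ w, G.Adj v w ∧ G.dist r v = G.dist r w + 1 := by
  obtain ⟨p, hp⟩ := hG.exists_walk_length_eq_dist v r
  cases p with
  | nil => exact absurd rfl hv
  | @cons _ w _ hadj q =>
    refine ⟨w, hadj, ?_⟩
    have hwr : G.dist r w ≤ q.length := dist_comm (G := G) ▸ dist_le q
    have hvw := hadj.diff_dist_adj (u := r)
    rw [Walk.length_cons, dist_comm] at hp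
    omega

/-- The neighbour of `v` one step closer to the root `r` (junk value `v` when there is none). -/
noncomputable def parent (G : SimpleGraph V) (r v : V) : V :=
  open Classical in
  if h : ∃ w, G.Adj v w ∧ G.dist r v = G.dist r w + 1 then h.choose else v

lemma Connected.adj_parent (hG : G.Connected) (hv : v ≠ r) : G.Adj v (G.parent r v) := by
  have h := hG.exists_adj_dist_eq_add_one hv
  rw [parent, dif_pos h]
  exact h.choose_spec.1

lemma Connected.dist_parent (hG : G.Connected) (hv : v ≠ r) :
    G.dist r v = G.dist r (G.parent r v) + 1 := by
  have h := hG.exists_adj_dist_eq_add_one hv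
  rw [parent, dif_pos h]
  exact h.choose_spec.2

lemma Walk.dist_le_length_of_mem_support [DecidableEq V] {u x : V} (p : G.Walk u w)
    (hx : x ∈ p.support) : G.dist u x ≤ p.length :=
  (dist_le (p.takeUntil x hx)).trans (p.length_takeUntil_le_length hx)

/-- In a tree the neighbour closer to the root is unique: it is the penultimate vertex of the
path from the root. -/
lemma IsTree.eq_parent (hG : G.IsTree) (hadj : G.Adj v w)
    (hdist : G.dist r v = G.dist r w + 1) : w = G.parent r v := by
  classical
  have hv : v ≠ r := by rintro rfl; simp at hdist
  obtain ⟨p, hp, -⟩ := hG.connected.exists_path_of_dist r v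
  have eq_penultimate : ∀ x, G.Adj v x → G.dist r v = G.dist r x + 1 → x = p.penultimate := by
    intro x hx hdx
    obtain ⟨q, hq, hql⟩ := hG.connected.exists_path_of_dist r x
    have hvq : v ∉ q.support := fun hmem => by
      have := q.dist_le_length_of_mem_support hmem
      omega
    exact hG.isAcyclic.eq_penultimate_of_adj_end hp hx
      (hG.isAcyclic.mem_support_of_ne_mem_support_of_adj_of_isPath hp hq hx hvq)
  rw [eq_penultimate w hadj hdist,
    eq_penultimate _ (hG.connected.adj_parent hv) (hG.connected.dist_parent hv)]

lemma IsTree.adj_iff_eq_parent_or_parent_eq (hG : G.IsTree) (hv : v ≠ r) :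
    G.Adj v w ↔ w = G.parent r v ∨ (w ≠ r ∧ G.parent r w = v) := by
  constructor
  · intro hadj
    rcases hG.dist_eq_dist_add_one_of_adj r hadj with h | h
    · exact .inl (hG.eq_parent hadj h)
    · refine .inr ⟨?_, (hG.eq_parent hadj.symm h).symm⟩
      rintro rfl
      simp at h
  · rintro (rfl | ⟨hw, rfl⟩)
    · exact hG.connected.adj_parent hv
    · exact (hG.connected.adj_parent hw).symm

variable [Fintype V]

noncomputable def children (G : SimpleGraph V) (r v : V) : Finset V :=
  open Classical in {u | u ≠ r ∧ G.parent r u = v}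

@[simp]
lemma mem_children {u : V} : u ∈ G.children r v ↔ u ≠ r ∧ G.parent r u = v := by
  simp [children]

lemma IsTree.degree_eq_card_children_add_one [DecidableRel G.Adj] (hG : G.IsTree) (hv : v ≠ r) :
    G.degree v = #(G.children r v) + 1 := by
  classical
  have hneighbors : G.neighborFinset v = insert (G.parent r v) (G.children r v) := by
    ext w
    simp [hG.adj_iff_eq_parent_or_parent_eq hv]
  have hparent : G.parent r v ∉ G.children r v := by
    rw [mem_children]
    rintro ⟨hp, hpp⟩
    have h₁ := hG.connected.dist_parent hv
    have h₂ := hG.connected.dist_parent hp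
    rw [hpp] at h₂
    omega
  rw [← card_neighborFinset_eq_degree, hneighbors, card_insert_of_notMem hparent]

lemma IsTree.existsUnique_child_of_degree_eq_two [DecidableRel G.Adj] (hG : G.IsTree)
    (hv : v ≠ r) (hdeg : G.degree v = 2) : ∃! u, u ≠ r ∧ G.parent r u = v := by
  have hcard := hG.degree_eq_card_children_add_one hv
  obtain ⟨u, hu⟩ := card_eq_one.mp (by omega : #(G.children r v) = 1)
  obtain ⟨hu_mem, hu_unique⟩ := eq_singleton_iff_unique_mem.mp hu
  exact ⟨u, mem_children.mp hu_mem, fun x hx => hu_unique x (mem_children.mpr hx)⟩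

end SimpleGraph

open SimpleGraph

theorem stmt_0_general {V : Type} [Fintype V] [DecidableEq V]
    (G : SimpleGraph V) [DecidableRel G.Adj]
    (D N : Finset V)
    (hdisj : Disjoint D N)
    (htree : G.IsTree)
    (hbip : ∀ u v, G.Adj u v → (u ∈ D ∧ v ∈ N) ∨ (u ∈ N ∧ v ∈ D))
    (hdeg : ∀ v ∈ N, G.degree v = 2) :
    ∀ i ∈ D, ∃ M : G.Subgraph,
      M.verts = ↑(D.erase i ∪ N) ∧ M.IsMatching := by
  intro i hi
  have mem_N_of_adj : ∀ u v, G.Adj u v → u ∈ D → v ∈ N := fun u v huv hu =>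
    ((hbip u v huv).resolve_right fun h => disjoint_left.mp hdisj hu h.1).2
  have mem_D_of_adj : ∀ u v, G.Adj u v → v ∈ N → u ∈ D := fun u v huv hv =>
    ((hbip u v huv).resolve_right fun h => disjoint_left.mp hdisj h.2 hv).1
  have ne_of_mem_N : ∀ n ∈ N, n ≠ i := fun n hn hni => disjoint_left.mp hdisj (hni ▸ hi) hn
  have hbij : Set.BijOn (G.parent i) ↑(D.erase i) ↑N := by
    refine ⟨fun v hv => ?_, fun v₁ hv₁ v₂ hv₂ heq => ?_, fun n hn => ?_⟩
    · obtain ⟨hvi, hvD⟩ := mem_erase.mp hv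
      exact mem_N_of_adj _ _ (htree.connected.adj_parent hvi) hvD
    · obtain ⟨hvi, hvD⟩ := mem_erase.mp hv₁
      have hn := mem_N_of_adj _ _ (htree.connected.adj_parent hvi) hvD
      exact (htree.existsUnique_child_of_degree_eq_two (ne_of_mem_N _ hn) (hdeg _ hn)).unique
        ⟨hvi, rfl⟩ ⟨(mem_erase.mp hv₂).1, heq.symm⟩
    · obtain ⟨u, ⟨hui, rfl⟩, -⟩ :=
        htree.existsUnique_child_of_degree_eq_two (ne_of_mem_N n hn) (hdeg n hn)
      exact ⟨u, mem_erase.mpr ⟨hui, mem_D_of_adj _ _ (htree.connected.adj_parent hui) hn⟩, rfl⟩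
  obtain ⟨M, hM, hmatch⟩ := Subgraph.IsMatching.exists_of_disjoint_sets_of_equiv
    (disjoint_coe.mpr (disjoint_of_subset_left (erase_subset i D) hdisj)) (hbij.equiv _)
    fun v => htree.connected.adj_parent (mem_erase.mp v.2).1
  exact ⟨M, by simpa using hM, hmatch⟩

theorem stmt_0 {V : Type} [Fintype V] [DecidableEq V]
    (G : SimpleGraph V) [DecidableRel G.Adj]
    (D N : Finset V) (k : ℕ) (hk : 0 < k)
    (hdisj : Disjoint D N) (hcover : D ∪ N = Finset.univ)
    (hD : D.card = k + 1) (hN : N.card = k)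
    (htree : G.IsTree)
    (hbip : ∀ u v, G.Adj u v → (u ∈ D ∧ v ∈ N) ∨ (u ∈ N ∧ v ∈ D))
    (hdeg : ∀ v ∈ N, G.degree v = 2) :
    ∀ i ∈ D, ∃ M : G.Subgraph,
      M.verts = ↑(D.erase i ∪ N) ∧ M.IsMatching :=
  stmt_0_general G D N hdisj htree hbip hdeg
end

section
/- Let G be a bipartite tree on node set D ⊔ N with |D| = k+1, |N| = k (k a positive integer) such that every node of N has degree 2. Then every edge of G is contained in a perfect matching of G − i on (D \ {i}) ⊔ N for some i ∈ D; consequently G is the union of the perfect matchings obtained by deleting the vertices of D one at a time. -/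
/-!
Root the tree at a vertex `i ∈ D`. Every vertex other than `i` has a unique parent, and a vertex
of `N` has degree 2, so it has exactly one child, which lies in `D`. Hence the edges joining each
`x ∈ D \ {i}` to its parent form a perfect matching of `G - i`. An edge `ab` with `a ∈ D`,
`b ∈ N` lies in the matching obtained by rooting the tree at the other neighbour of `b`.
-/

namespace SimpleGraph

variable {V : Type*} {G : SimpleGraph V}

theorem IsAcyclic.existsUnique_adj_dist_add_one_eq (hG : G.IsAcyclic) {i x : V}
    (hr : G.Reachable i x) (hx : x ≠ i) :
    ∃! y, G.Adj x y ∧ G.dist i y + 1 = G.dist i x := by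
  obtain ⟨p, hp, hlen⟩ := hr.exists_path_of_dist
  have hnil : ¬p.Nil := Walk.not_nil_of_ne hx.symm
  refine ⟨p.penultimate, ⟨(p.adj_penultimate hnil).symm, ?_⟩, ?_⟩
  · have hle : G.dist i p.penultimate ≤ p.length - 1 := p.length_dropLast ▸ G.dist_le _
    have hpos : 0 < p.length := Walk.not_nil_iff_lt_length.mp hnil
    rcases hG.dist_eq_dist_add_one_of_adj_of_reachable i (p.adj_penultimate hnil)
      (hr.trans (p.adj_penultimate hnil).symm.reachable) with h | h <;> omega
  · rintro y ⟨hxy, hdist⟩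
    classical
    obtain ⟨q, hq, hqlen⟩ := (hr.trans hxy.reachable).exists_path_of_dist
    -- A shortest path to `y` is too short to pass through `x`.
    have hxq : x ∉ q.support := fun hmem => by
      have := G.dist_le (q.takeUntil x hmem)
      have := q.length_takeUntil_le_length hmem
      omega
    exact hG.eq_penultimate_of_adj_end hp hxy
      (hG.mem_support_of_ne_mem_support_of_adj_of_isPath hp hq hxy hxq)

theorem IsAcyclic.existsUnique_adj_dist_eq_add_one_of_degree_eq_two (hG : G.IsAcyclic)
    {i x : V} [Fintype (G.neighborSet x)] (hr : G.Reachable i x) (hx : x ≠ i)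
    (hdeg : G.degree x = 2) : ∃! c, G.Adj x c ∧ G.dist i c = G.dist i x + 1 := by
  classical
  obtain ⟨y, ⟨hxy, hy⟩, hparent⟩ := hG.existsUnique_adj_dist_add_one_eq hr hx
  have hchild : ∀ c, G.Adj x c → (G.dist i c = G.dist i x + 1 ↔ c ≠ y) := fun c hxc => by
    have := hparent c
    rcases hG.dist_eq_dist_add_one_of_adj_of_reachable i hxc hr with h | h <;> grind
  obtain ⟨c, hc⟩ : ∃ c, (G.neighborFinset x).erase y = {c} := by
    refine Finset.card_eq_one.mp ?_
    rw [Finset.card_erase_of_mem ((G.mem_neighborFinset x y).mpr hxy),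
      card_neighborFinset_eq_degree, hdeg]
  have hchildren : ∀ z, G.Adj x z ∧ G.dist i z = G.dist i x + 1 ↔ z = c := fun z => by
    rw [← Finset.mem_singleton (a := c) (b := z), ← hc, Finset.mem_erase, mem_neighborFinset]
    grind
  exact ⟨c, (hchildren c).mpr rfl, fun z hz => (hchildren z).mp hz⟩

section Bipartition

variable {D N : Finset V}

theorem mem_right_of_adj_of_mem_left (hdisj : Disjoint D N)
    (hbip : ∀ u v, G.Adj u v → (u ∈ D ∧ v ∈ N) ∨ (u ∈ N ∧ v ∈ D)) {x y : V}
    (hxy : G.Adj x y) (hx : x ∈ D) : y ∈ N := by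
  have := Finset.disjoint_left.mp hdisj hx
  grind

theorem mem_left_of_adj_of_mem_right (hdisj : Disjoint D N)
    (hbip : ∀ u v, G.Adj u v → (u ∈ D ∧ v ∈ N) ∨ (u ∈ N ∧ v ∈ D)) {x y : V}
    (hxy : G.Adj x y) (hx : x ∈ N) : y ∈ D := by
  have := Finset.disjoint_right.mp hdisj hx
  grind

/-- Each `x ∈ D \ {i}` is joined to its parent, the neighbour of `x` one step closer to `i`. -/
def parentMatching [DecidableEq V] (G : SimpleGraph V) (D N : Finset V) (i : V) : G.Subgraph where
  verts := ↑(D.erase i ∪ N)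
  Adj x y := G.Adj x y ∧
    (x ∈ D.erase i ∧ y ∈ N ∧ G.dist i x = G.dist i y + 1 ∨
      y ∈ D.erase i ∧ x ∈ N ∧ G.dist i y = G.dist i x + 1)
  adj_sub h := h.1
  edge_vert := by
    rintro x y ⟨-, ⟨hx, -⟩ | ⟨-, hx, -⟩⟩
    exacts [Finset.mem_union_left _ hx, Finset.mem_union_right _ hx]
  symm := ⟨fun _ _ ⟨hxy, h⟩ => ⟨hxy.symm, h.symm⟩⟩

theorem IsTree.parentMatching_isMatching [DecidableEq V] [G.LocallyFinite] (hG : G.IsTree)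
    (hdisj : Disjoint D N)
    (hbip : ∀ u v, G.Adj u v → (u ∈ D ∧ v ∈ N) ∨ (u ∈ N ∧ v ∈ D))
    (hdeg : ∀ v ∈ N, G.degree v = 2) {i : V} (hi : i ∈ D) :
    (G.parentMatching D N i).IsMatching := by
  intro x hx
  rcases Finset.mem_union.mp hx with hxD | hxN
  · obtain ⟨hxi, hxD⟩ := Finset.mem_erase.mp hxD
    obtain ⟨y, ⟨hxy, hy⟩, hparent⟩ :=
      hG.isAcyclic.existsUnique_adj_dist_add_one_eq (hG.connected i x) hxi
    refine ⟨y, ⟨hxy, .inl ⟨Finset.mem_erase.mpr ⟨hxi, hxD⟩,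
      mem_right_of_adj_of_mem_left hdisj hbip hxy hxD, hy.symm⟩⟩, ?_⟩
    rintro z ⟨hxz, ⟨-, -, hz⟩ | ⟨-, hxN, -⟩⟩
    · exact hparent z ⟨hxz, hz.symm⟩
    · exact absurd hxN (Finset.disjoint_left.mp hdisj hxD)
  · have hxi : x ≠ i := fun h => Finset.disjoint_left.mp hdisj (h ▸ hi) hxN
    obtain ⟨c, ⟨hxc, hc⟩, hchild⟩ :=
      hG.isAcyclic.existsUnique_adj_dist_eq_add_one_of_degree_eq_two (hG.connected i x) hxi
        (hdeg x hxN)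
    have hci : c ≠ i := by
      rintro rfl
      simp at hc
    refine ⟨c, ⟨hxc, .inr ⟨Finset.mem_erase.mpr ⟨hci,
      mem_left_of_adj_of_mem_right hdisj hbip hxc hxN⟩, hxN, hc⟩⟩, ?_⟩
    rintro z ⟨hxz, ⟨hxD, -, -⟩ | ⟨-, -, hz⟩⟩
    · exact absurd hxN (Finset.disjoint_left.mp hdisj (Finset.mem_of_mem_erase hxD))
    · exact hchild z ⟨hxz, hz⟩

theorem IsTree.exists_parentMatching_adj [DecidableEq V] [G.LocallyFinite]
    (hG : G.IsTree) (hdisj : Disjoint D N)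
    (hbip : ∀ u v, G.Adj u v → (u ∈ D ∧ v ∈ N) ∨ (u ∈ N ∧ v ∈ D))
    (hdeg : ∀ v ∈ N, G.degree v = 2) {a b : V} (hab : G.Adj a b) (ha : a ∈ D) (hb : b ∈ N) :
    ∃ i ∈ D, (G.parentMatching D N i).Adj a b := by
  -- Root the tree at the other neighbour `i` of `b`; then `b` is the parent of `a`.
  obtain ⟨i, hi, hia⟩ : ∃ i ∈ G.neighborFinset b, i ≠ a :=
    Finset.exists_mem_ne (by rw [card_neighborFinset_eq_degree, hdeg b hb]; omega) a
  have hbi : G.Adj b i := (G.mem_neighborFinset b i).mp hi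
  have hib : G.dist i b = 1 := dist_eq_one_iff_adj.mpr hbi.symm
  have hia' : G.dist i a = G.dist i b + 1 := by
    have := hG.connected.dist_eq_zero_iff.not.mpr hia
    have := hG.dist_eq_dist_add_one_of_adj i hab
    omega
  exact ⟨i, mem_left_of_adj_of_mem_right hdisj hbip hbi hb,
    hab, .inl ⟨Finset.mem_erase.mpr ⟨hia.symm, ha⟩, hb, hia'⟩⟩

end Bipartition

end SimpleGraph

theorem stmt_1_general {V : Type} [Fintype V] [DecidableEq V]
    (G : SimpleGraph V) [DecidableRel G.Adj]
    (D N : Finset V)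
    (hdisj : Disjoint D N)
    (htree : G.IsTree)
    (hbip : ∀ u v, G.Adj u v → (u ∈ D ∧ v ∈ N) ∨ (u ∈ N ∧ v ∈ D))
    (hdeg : ∀ v ∈ N, G.degree v = 2) :
    ∀ u v, G.Adj u v → ∃ i ∈ D, ∃ M : G.Subgraph,
      M.verts = ↑(D.erase i ∪ N) ∧ M.IsMatching ∧ M.Adj u v := by
  intro u v huv
  rcases hbip u v huv with ⟨hu, hv⟩ | ⟨hu, hv⟩
  · obtain ⟨i, hi, hM⟩ := htree.exists_parentMatching_adj hdisj hbip hdeg huv hu hv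
    exact ⟨i, hi, _, rfl, htree.parentMatching_isMatching hdisj hbip hdeg hi, hM⟩
  · obtain ⟨i, hi, hM⟩ := htree.exists_parentMatching_adj hdisj hbip hdeg huv.symm hv hu
    exact ⟨i, hi, _, rfl, htree.parentMatching_isMatching hdisj hbip hdeg hi, hM.symm⟩

theorem stmt_1 {V : Type} [Fintype V] [DecidableEq V]
    (G : SimpleGraph V) [DecidableRel G.Adj]
    (D N : Finset V) (k : ℕ) (hk : 0 < k)
    (hdisj : Disjoint D N) (hcover : D ∪ N = Finset.univ)
    (hD : D.card = k + 1) (hN : N.card = k)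
    (htree : G.IsTree)
    (hbip : ∀ u v, G.Adj u v → (u ∈ D ∧ v ∈ N) ∨ (u ∈ N ∧ v ∈ D))
    (hdeg : ∀ v ∈ N, G.degree v = 2) :
    ∀ u v, G.Adj u v → ∃ i ∈ D, ∃ M : G.Subgraph,
      M.verts = ↑(D.erase i ∪ N) ∧ M.IsMatching ∧ M.Adj u v :=
  stmt_1_general G D N hdisj htree hbip hdeg
end

section
/- A point x ∈ ℝ^d is feasible for the signed system (A, Σ) if and only if no apex node of the covector graph G_A(x) is incident only with negative edges. -/
/-- Edge `(i,j)` of the covector graph `G_A(x)` of a finite point `x`: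
the minimum in row `j` of `A ⊙ x` (taken over the finite entries of the row)
is attained at position `i`. -/
def covEdge {n d : ℕ} (A : Fin n → Fin d → WithTop ℝ) (x : Fin d → ℝ)
    (i : Fin d) (j : Fin n) : Prop :=
  A j i + (x i : WithTop ℝ) =
    (Finset.univ.filter fun k => A j k ≠ ⊤).inf fun k => A j k + (x k : WithTop ℝ)

/-- A point `x ∈ ℝ^d` is feasible for the signed system `(A, Σ)` if and only if
no apex node of the covector graph `G_A(x)` is incident only with negative edges. -/
theorem stmt_2 (n d : ℕ) (A : Fin n → Fin d → WithTop ℝ)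
    (σ : Fin n → Fin d → SignType)
    (hAσ : ∀ j i, A j i = ⊤ ↔ σ j i = 0) (x : Fin d → ℝ) :
    (∀ j : Fin n,
        ((Finset.univ.filter fun i => σ j i = 1).inf fun i => A j i + (x i : WithTop ℝ)) ≤
        ((Finset.univ.filter fun i => σ j i = -1).inf fun i => A j i + (x i : WithTop ℝ)))
    ↔ ∀ j : Fin n, ¬ ((∃ i, covEdge A x i j) ∧ ∀ i, covEdge A x i j → σ j i = -1) := by
  apply forall_congr'
  intro j
  set f : Fin d → WithTop ℝ := fun k => A j k + (x k : WithTop ℝ) with hf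
  set F : Finset (Fin d) := Finset.univ.filter fun k => A j k ≠ ⊤ with hF
  have hcov : ∀ i, covEdge A x i j ↔ f i = F.inf f := fun i => Iff.rfl
  by_cases hFe : F.Nonempty
  · obtain ⟨i0, hi0F, hi0⟩ := Finset.exists_mem_eq_inf F hFe f
    have hmtop : F.inf f ≠ ⊤ := by
      rw [hi0]
      have hA0 : A j i0 ≠ ⊤ := by
        simpa [hF] using hi0F
      exact WithTop.add_ne_top.2 ⟨hA0, WithTop.coe_ne_top⟩
    constructor
    · rintro hle ⟨⟨i1, hi1⟩, hneg⟩
      have hedge : f i1 = F.inf f := (hcov i1).1 hi1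
      have hσ1 : σ j i1 = -1 := hneg i1 hi1
      have hle2 : ((Finset.univ.filter fun i => σ j i = -1).inf f) ≤ F.inf f := by
        refine le_trans (Finset.inf_le ?_) (le_of_eq hedge)
        simp [hσ1]
      have hgt : F.inf f < (Finset.univ.filter fun i => σ j i = 1).inf f := by
        rw [Finset.lt_inf_iff (lt_top_iff_ne_top.2 hmtop)]
        intro i hi
        simp only [Finset.mem_filter, Finset.mem_univ, true_and] at hi
        have hiF : i ∈ F := by
          simp only [hF, Finset.mem_filter, Finset.mem_univ, true_and]
          intro htop
          rw [(hAσ j i).1 htop] at hi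
          exact absurd hi (by decide)
        have hmle : F.inf f ≤ f i := Finset.inf_le hiF
        rcases lt_or_eq_of_le hmle with h | h
        · exact h
        · have : σ j i = -1 := hneg i ((hcov i).2 h.symm)
          rw [hi] at this
          exact absurd this (by decide)
      exact absurd (hle.trans hle2) hgt.not_ge
    · intro hR
      by_cases hall : ∀ i, covEdge A x i j → σ j i = -1
      · exact absurd ⟨⟨i0, (hcov i0).2 hi0.symm⟩, hall⟩ hR
      push_neg at hall
      obtain ⟨i1, he1, hs1⟩ := hall
      have hfe1 : f i1 = F.inf f := (hcov i1).1 he1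
      have hi1F : i1 ∈ F := by
        simp only [hF, Finset.mem_filter, Finset.mem_univ, true_and]
        intro htop
        have : f i1 = ⊤ := by simp [hf, htop]
        rw [hfe1] at this
        exact hmtop this
      have hs1' : σ j i1 = 1 := by
        have hA : A j i1 ≠ ⊤ := by simpa [hF] using hi1F
        have h0 : σ j i1 ≠ 0 := fun h => hA ((hAσ j i1).2 h)
        cases h : σ j i1
        · exact absurd h h0
        · exact absurd h hs1
        · rfl
      calc ((Finset.univ.filter fun i => σ j i = 1).inf f)
          ≤ f i1 := Finset.inf_le (by simp [hs1'])
        _ = F.inf f := hfe1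
        _ ≤ (Finset.univ.filter fun i => σ j i = -1).inf f := by
            apply Finset.inf_mono
            intro i hi
            simp only [Finset.mem_filter, Finset.mem_univ, true_and] at hi
            simp only [hF, Finset.mem_filter, Finset.mem_univ, true_and]
            intro htop
            rw [(hAσ j i).1 htop] at hi
            exact absurd hi (by decide)
  · have hσ0 : ∀ i, σ j i = 0 := by
      intro i
      apply (hAσ j i).1
      by_contra hA
      exact hFe ⟨i, by simp [hF, hA]⟩
    constructor
    · rintro _ ⟨⟨i, hi⟩, hneg⟩
      have := hneg i hi
      rw [hσ0 i] at this
      exact absurd this (by decide)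
    · intro _
      have h1 : (Finset.univ.filter fun i => σ j i = 1) = ∅ := by
        apply Finset.filter_false_of_mem
        intro i _
        rw [hσ0 i]; decide
      have h2 : (Finset.univ.filter fun i => σ j i = -1) = ∅ := by
        apply Finset.filter_false_of_mem
        intro i _
        rw [hσ0 i]; decide
      simp [h1, h2]
end

section
/- A point x ∈ (ℝ ∪ {∞})^d is feasible for the signed system (A, Σ) if and only if no apex node of the generalized covector graph G_A(x) is incident only with negative edges. -/
/-- Edge `(i,j)` of the generalized covector graph `G_A(x)` of a point
`x ∈ (ℝ ∪ {∞})^d`: the minimum of `a_{jk} + x_k` over `k` in the support of `x`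
with `a_{jk} ≠ ∞` is attained at `i` and is finite. -/
def genCovEdge {n d : ℕ} (A : Fin n → Fin d → WithTop ℝ) (x : Fin d → WithTop ℝ)
    (i : Fin d) (j : Fin n) : Prop :=
  A j i + x i =
    ((Finset.univ.filter fun k => x k ≠ ⊤ ∧ A j k ≠ ⊤).inf fun k => A j k + x k) ∧
  ((Finset.univ.filter fun k => x k ≠ ⊤ ∧ A j k ≠ ⊤).inf fun k => A j k + x k) ≠ ⊤

private lemma signtype_eq_one {t : SignType} (h0 : t ≠ 0) (hn : t ≠ -1) : t = 1 := by
  cases t <;> simp_all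

/-- A point `x ∈ (ℝ ∪ {∞})^d` is feasible for the signed system `(A, Σ)` if and
only if no apex node of the generalized covector graph `G_A(x)` is incident only
with negative edges. -/
theorem stmt_3 (n d : ℕ) (A : Fin n → Fin d → WithTop ℝ)
    (σ : Fin n → Fin d → SignType)
    (hAσ : ∀ j i, A j i = ⊤ ↔ σ j i = 0) (x : Fin d → WithTop ℝ) :
    (∀ j : Fin n,
        ((Finset.univ.filter fun i => σ j i = 1).inf fun i => A j i + x i) ≤
        ((Finset.univ.filter fun i => σ j i = -1).inf fun i => A j i + x i))
    ↔ ∀ j : Fin n, ¬ ((∃ i, genCovEdge A x i j) ∧ ∀ i, genCovEdge A x i j → σ j i = -1) := by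
  have key : ∀ j : Fin n,
      (((Finset.univ.filter fun i => σ j i = 1).inf fun i => A j i + x i) ≤
        ((Finset.univ.filter fun i => σ j i = -1).inf fun i => A j i + x i))
      ↔ ¬ ((∃ i, genCovEdge A x i j) ∧ ∀ i, genCovEdge A x i j → σ j i = -1) := by
    intro j
    set S : Finset (Fin d) := Finset.univ.filter fun k => x k ≠ ⊤ ∧ A j k ≠ ⊤ with hS
    set m : WithTop ℝ := S.inf fun k => A j k + x k with hm
    -- terms are ≥ m, as long as they are finite (or trivially ≤ ⊤)
    have hge : ∀ i : Fin d, m ≤ A j i + x i := by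
      intro i
      by_cases ht : A j i + x i = ⊤
      · rw [ht]; exact le_top
      · have hx : x i ≠ ⊤ := fun h => ht (by simp [h])
        have hA : A j i ≠ ⊤ := fun h => ht (by simp [h])
        exact Finset.inf_le (Finset.mem_filter.mpr ⟨Finset.mem_univ _, hx, hA⟩)
    by_cases hmt : m = ⊤
    · constructor
      · rintro _ ⟨⟨i0, _, h0⟩, _⟩; exact h0 hmt
      · intro _
        apply Finset.le_inf
        intro i _
        have := hge i
        rw [hmt] at this
        rw [top_le_iff.mp this]
        exact le_top
    · -- m is finite, attained at some i0 ∈ S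
      have hSne : S.Nonempty := by
        by_contra h
        rw [Finset.not_nonempty_iff_eq_empty] at h
        exact hmt (by rw [hm, h, Finset.inf_empty])
      obtain ⟨i0, hi0S, hi0⟩ := Finset.exists_mem_eq_inf S hSne fun k => A j k + x k
      have hedge0 : genCovEdge A x i0 j := ⟨hi0.symm, hmt⟩
      have hσ0 : σ j i0 ≠ 0 := by
        have := (Finset.mem_filter.mp hi0S).2.2
        exact fun h => this ((hAσ j i0).mpr h)
      have hPge : m ≤ (Finset.univ.filter fun i => σ j i = 1).inf fun i => A j i + x i :=
        Finset.le_inf fun i _ => hge i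
      constructor
      · rintro hle ⟨_, hall⟩
        have hneg0 : σ j i0 = -1 := hall i0 hedge0
        have hNle : ((Finset.univ.filter fun i => σ j i = -1).inf fun i => A j i + x i) ≤ m :=
          le_trans (Finset.inf_le (Finset.mem_filter.mpr ⟨Finset.mem_univ _, hneg0⟩)) hi0.ge
        have hPm : ((Finset.univ.filter fun i => σ j i = 1).inf fun i => A j i + x i) = m :=
          le_antisymm (le_trans hle hNle) hPge
        have hPne : (Finset.univ.filter fun i => σ j i = 1).Nonempty := by
          by_contra h
          rw [Finset.not_nonempty_iff_eq_empty] at h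
          rw [h, Finset.inf_empty] at hPm
          exact hmt hPm.symm
        obtain ⟨i1, hi1P, hi1⟩ :=
          Finset.exists_mem_eq_inf _ hPne fun k => A j k + x k
        have hedge1 : genCovEdge A x i1 j := ⟨by rw [← hi1, hPm], hmt⟩
        have : σ j i1 = -1 := hall i1 hedge1
        have h1 : σ j i1 = 1 := (Finset.mem_filter.mp hi1P).2
        rw [h1] at this
        exact absurd this (by decide)
      · intro hnot
        rw [not_and] at hnot
        have := hnot ⟨i0, hedge0⟩
        push_neg at this
        obtain ⟨i1, hedge1, hne1⟩ := this
        have hA1 : A j i1 ≠ ⊤ := by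
          intro h
          exact hedge1.2 (by rw [← hedge1.1, h, top_add])
        have h11 : σ j i1 = 1 :=
          signtype_eq_one (fun h => hA1 ((hAσ j i1).mpr h)) hne1
        have hPle : ((Finset.univ.filter fun i => σ j i = 1).inf fun i => A j i + x i) ≤ m :=
          le_trans (Finset.inf_le (Finset.mem_filter.mpr ⟨Finset.mem_univ _, h11⟩)) hedge1.1.le
        exact le_trans hPle (Finset.le_inf fun i _ => hge i)
  exact forall_congr' key
end

section
/- Let I be a finite index set, b_0 ∈ ℝ ∪ {∞}, b_i ∈ ℝ ∪ {∞} for i ∈ I, and ε > 0. Then b_0 ≤ min_{i ∈ I} b_i if and only if for every ℓ ∈ I one has min( b_0, min_{i ∈ I \ {ℓ}} (b_i + ε) ) ≤ b_ℓ. -/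
/-! Take ℓ minimising `b`. If `b ℓ` is finite, every `b i + ε` with `i ≠ ℓ` lies strictly above it,
so the hypothesis at ℓ can only hold through `b₀ ≤ b ℓ`. -/

theorem Finset.le_inf_iff_forall_min_inf_erase_le {ι α : Type*} [DecidableEq ι]
    [LinearOrder α] [OrderTop α] {I : Finset ι} {a : α} {b : ι → α} {f : α → α}
    (hf : Monotone f) (hlt : ∀ x, x ≠ ⊤ → x < f x) :
    a ≤ I.inf b ↔ ∀ ℓ ∈ I, min a ((I.erase ℓ).inf (f ∘ b)) ≤ b ℓ := by
  refine ⟨fun h ℓ hℓ => min_le_of_left_le (h.trans (inf_le hℓ)), fun h => ?_⟩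
  obtain rfl | hI := I.eq_empty_or_nonempty
  · exact le_top
  obtain ⟨ℓ, hℓ, hmin⟩ := I.exists_mem_eq_inf hI b
  rw [hmin]
  obtain htop | hne := eq_or_ne (b ℓ) ⊤
  · exact htop ▸ le_top
  have hlower : f (b ℓ) ≤ (I.erase ℓ).inf (f ∘ b) :=
    Finset.le_inf fun i hi => hf (hmin ▸ inf_le (mem_of_mem_erase hi))
  exact (min_le_iff.mp (h ℓ hℓ)).resolve_right ((hlt _ hne).trans_le hlower).not_ge

theorem WithTop.lt_add_coe_of_pos {x : WithTop ℝ} (hx : x ≠ ⊤) {ε : ℝ} (hε : 0 < ε) :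
    x < x + ε := by
  lift x to ℝ using hx
  exact_mod_cast lt_add_of_pos_right x hε

/-- For a finite index set `I`, `b₀, b_i ∈ ℝ ∪ {∞}` and `ε > 0`:
`b₀ ≤ min_{i ∈ I} b_i` if and only if for every `ℓ ∈ I` one has
`min(b₀, min_{i ∈ I \ {ℓ}} (b_i + ε)) ≤ b_ℓ`. -/
theorem stmt_6 {ι : Type} [DecidableEq ι] (I : Finset ι)
    (b₀ : WithTop ℝ) (b : ι → WithTop ℝ) (ε : ℝ) (hε : 0 < ε) :
    b₀ ≤ I.inf b ↔
      ∀ ℓ ∈ I, min b₀ ((I.erase ℓ).inf fun i => b i + (ε : WithTop ℝ)) ≤ b ℓ :=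
  Finset.le_inf_iff_forall_min_inf_erase_le (f := (· + (ε : WithTop ℝ)))
    (fun _ _ h => add_le_add_left h _) (fun _ hx => WithTop.lt_add_coe_of_pos hx hε)
end

section
/- Let w, z ∈ (ℝ ∪ {∞})^d be points whose supports intersect in exactly one index k. Define v = min( w − w_k, z − z_k ) componentwise (where subtracting w_k means subtracting the real number w_k from each finite coordinate). Then v has support supp(w) ∪ supp(z), and v_i − v_ℓ = w_i − w_ℓ for all i, ℓ ∈ supp(w), and v_i − v_ℓ = z_i − z_ℓ for all i, ℓ ∈ supp(z). -/
lemma stmt8_auxw (d : ℕ) (w z : Fin d → WithTop ℝ) (k : Fin d) (wk zk : ℝ)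
    (hwk : w k = (wk : WithTop ℝ)) (hzk : z k = (zk : WithTop ℝ))
    (hsupp : {i | w i ≠ ⊤} ∩ {i | z i ≠ ⊤} = {k})
    (v : Fin d → WithTop ℝ)
    (hv : ∀ i, v i = min (w i + ((-wk : ℝ) : WithTop ℝ)) (z i + ((-zk : ℝ) : WithTop ℝ))) :
    ∀ (i : Fin d) (wi : ℝ), w i = (wi : WithTop ℝ) → v i = ((wi - wk : ℝ) : WithTop ℝ) := by
  intro i wi hwi
  by_cases hik : i = k
  · subst hik
    have hwiwk : wi = wk := by rw [hwi] at hwk; exact_mod_cast hwk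
    subst hwiwk
    rw [hv, hwi, hzk, ← WithTop.coe_add, ← WithTop.coe_add, ← WithTop.coe_min,
      WithTop.coe_eq_coe]
    simp [min_def]
  · have hzi : z i = ⊤ := by
      by_contra hz
      have : i ∈ ({k} : Set (Fin d)) := by
        rw [← hsupp]; exact ⟨by simp [hwi], hz⟩
      exact hik this
    rw [hv, hwi, hzi, ← WithTop.coe_add]
    simp [min_def, sub_eq_add_neg]

/-- Let `w, z ∈ (ℝ ∪ {∞})^d` with `supp(w) ∩ supp(z) = {k}` and `w k, z k` finite.
Let `v = min(w − w_k, z − z_k)` componentwise.  Then `supp(v) = supp(w) ∪ supp(z)`,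
`v_i − v_ℓ = w_i − w_ℓ` on `supp(w)` and `v_i − v_ℓ = z_i − z_ℓ` on `supp(z)`. -/
theorem stmt_8 (d : ℕ) (w z : Fin d → WithTop ℝ) (k : Fin d) (wk zk : ℝ)
    (hwk : w k = (wk : WithTop ℝ)) (hzk : z k = (zk : WithTop ℝ))
    (hsupp : {i | w i ≠ ⊤} ∩ {i | z i ≠ ⊤} = {k})
    (v : Fin d → WithTop ℝ)
    (hv : ∀ i, v i = min (w i + ((-wk : ℝ) : WithTop ℝ)) (z i + ((-zk : ℝ) : WithTop ℝ))) :
    ({i | v i ≠ ⊤} = {i | w i ≠ ⊤} ∪ {i | z i ≠ ⊤}) ∧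
    (∀ i l : Fin d, ∀ wi wl : ℝ, w i = (wi : WithTop ℝ) → w l = (wl : WithTop ℝ) →
      ∃ vi vl : ℝ, v i = (vi : WithTop ℝ) ∧ v l = (vl : WithTop ℝ) ∧ vi - vl = wi - wl) ∧
    (∀ i l : Fin d, ∀ zi zl : ℝ, z i = (zi : WithTop ℝ) → z l = (zl : WithTop ℝ) →
      ∃ vi vl : ℝ, v i = (vi : WithTop ℝ) ∧ v l = (vl : WithTop ℝ) ∧ vi - vl = zi - zl) := by
  have hsupp' : {i | z i ≠ ⊤} ∩ {i | w i ≠ ⊤} = {k} := by rw [Set.inter_comm]; exact hsupp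
  have hvz : ∀ i, v i = min (z i + ((-zk : ℝ) : WithTop ℝ)) (w i + ((-wk : ℝ) : WithTop ℝ)) := by
    intro i; rw [hv, min_comm]
  have hw := stmt8_auxw d w z k wk zk hwk hzk hsupp v hv
  have hz := stmt8_auxw d z w k zk wk hzk hwk hsupp' v hvz
  refine ⟨?_, ?_, ?_⟩
  · ext i
    simp only [Set.mem_setOf_eq, Set.mem_union]
    constructor
    · intro hvi
      by_contra h
      push_neg at h
      rw [hv i, h.1, h.2] at hvi
      simp at hvi
    · rintro (h | h)
      · obtain ⟨wi, hwi⟩ := WithTop.ne_top_iff_exists.mp h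
        rw [hw i wi hwi.symm]; exact WithTop.coe_ne_top
      · obtain ⟨zi, hzi⟩ := WithTop.ne_top_iff_exists.mp h
        rw [hz i zi hzi.symm]; exact WithTop.coe_ne_top
  · intro i l wi wl hwi hwl
    exact ⟨wi - wk, wl - wk, hw i wi hwi, hw l wl hwl, by ring⟩
  · intro i l zi zl hzi hzl
    exact ⟨zi - zk, zl - zk, hz i zi hzi, hz l zl hzl, by ring⟩
end

section
/- Let (A, Σ) be a signed system in which the i-th column of Σ contains only '+' entries and every row contains exactly one '−' entry. Then for every z ∈ (ℝ∪{∞})^d there exists ξ ∈ ℝ such that the point obtained from z by replacing its i-th coordinate with ξ is feasible for (A, Σ). -/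
/-! Every row `j` has its `−` in a column `k_j ≠ i` and a `+` in column `i`, so row `j` is satisfied as
soon as `a_{ji} + ξ ≤ a_{j k_j} + z_{k_j}`. These are finitely many upper bounds on `ξ` (those with
`z_{k_j} = ∞` are vacuous), so a small enough real `ξ` satisfies all of them. -/

theorem WithTop.exists_forall_coe_add_le {ι α : Type*} [Finite ι] [AddCommGroup α] [LinearOrder α]
    [IsOrderedAddMonoid α] (c : ι → α) (f : ι → WithTop α) :
    ∃ ξ : α, ∀ j, (c j : WithTop α) + ξ ≤ f j := by
  obtain ⟨ξ, hξ⟩ := (Set.finite_range fun j => (f j).untopD 0 - c j).bddBelow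
  refine ⟨ξ, fun j => ?_⟩
  cases hf : f j with
  | top => exact le_top
  | coe x =>
    have hξj : ξ ≤ x - c j := by simpa [hf] using hξ ⟨j, rfl⟩
    exact_mod_cast le_sub_iff_add_le'.mp hξj

theorem Finset.filter_eq_singleton_of_existsUnique {ι : Type*} [Fintype ι] {p : ι → Prop}
    [DecidablePred p] {k : ι} (hk : p k) (huniq : ∀ l, p l → l = k) :
    Finset.univ.filter p = {k} := by
  ext l
  simpa using ⟨huniq l, fun h => h ▸ hk⟩

theorem stmt_9_general (n d : ℕ) (A : Fin n → Fin d → ℝ)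
    (σ : Fin n → Fin d → SignType)
    (i : Fin d) (hcol : ∀ j, σ j i = 1)
    (hrow : ∀ j, ∃! l, σ j l = -1) :
    ∀ z : Fin d → WithTop ℝ, ∃ ξ : ℝ,
      ∀ j : Fin n,
        ((Finset.univ.filter fun l => σ j l = 1).inf fun l =>
            ((A j l : ℝ) : WithTop ℝ) + Function.update z i ((ξ : ℝ) : WithTop ℝ) l) ≤
        ((Finset.univ.filter fun l => σ j l = -1).inf fun l =>
            ((A j l : ℝ) : WithTop ℝ) + Function.update z i ((ξ : ℝ) : WithTop ℝ) l) := by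
  intro z
  choose k hk huniq using hrow
  have hki : ∀ j, k j ≠ i := fun j h => by simpa [h, hcol j] using hk j
  obtain ⟨ξ, hξ⟩ :=
    WithTop.exists_forall_coe_add_le (fun j => A j i) (fun j => A j (k j) + z (k j))
  refine ⟨ξ, fun j => ?_⟩
  rw [Finset.filter_eq_singleton_of_existsUnique (p := (σ j · = -1)) (hk j) (huniq j),
    Finset.inf_singleton, Function.update_of_ne (hki j)]
  refine (Finset.inf_le (b := i) (by simp [hcol j])).trans ?_
  simpa using hξ j

/-- Let `(A, Σ)` be a signed system with finite coefficients in which every entry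
of `Σ` is `+` or `−`, the `i`-th column of `Σ` contains only `+` entries and every
row contains exactly one `−` entry.  Then for every `z ∈ (ℝ ∪ {∞})^d` there is a
`ξ ∈ ℝ` such that replacing the `i`-th coordinate of `z` by `ξ` yields a feasible
point for `(A, Σ)`. -/
theorem stmt_9 (n d : ℕ) (A : Fin n → Fin d → ℝ)
    (σ : Fin n → Fin d → SignType)
    (hpm : ∀ j i, σ j i = 1 ∨ σ j i = -1)
    (i : Fin d) (hcol : ∀ j, σ j i = 1)
    (hrow : ∀ j, ∃! l, σ j l = -1) :
    ∀ z : Fin d → WithTop ℝ, ∃ ξ : ℝ,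
      ∀ j : Fin n,
        ((Finset.univ.filter fun l => σ j l = 1).inf fun l =>
            ((A j l : ℝ) : WithTop ℝ) + Function.update z i ((ξ : ℝ) : WithTop ℝ) l) ≤
        ((Finset.univ.filter fun l => σ j l = -1).inf fun l =>
            ((A j l : ℝ) : WithTop ℝ) + Function.update z i ((ξ : ℝ) : WithTop ℝ) l) :=
  stmt_9_general n d A σ i hcol hrow
end

section
/- Let y be a basic covector graph with distinguished direction δ. In the tree induced by y on (D ∪ {δ}) ⊔ N, the edges along the unique path from δ to any other coordinate node in D alternate between positive and negative, starting with a positive edge at δ. -/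
lemma aux_getVert_inj {V : Type*} {G : SimpleGraph V} {u v : V} (p : G.Walk u v) :
    p.IsPath → ∀ s, s ≤ p.length → ∀ t, t ≤ p.length →
      p.getVert s = p.getVert t → s = t := by
  induction p with
  | nil => intro _ s hs t ht _; simp at hs ht; omega
  | @cons u v w h q ihq =>
    intro hp s hs t ht heq
    rw [SimpleGraph.Walk.cons_isPath_iff] at hp
    obtain ⟨hq, hu⟩ := hp
    cases s with
    | zero =>
      cases t with
      | zero => rfl
      | succ t =>
        exfalso
        apply hu
        rw [SimpleGraph.Walk.mem_support_iff_exists_getVert]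
        refine ⟨t, ?_, ?_⟩
        · simpa [SimpleGraph.Walk.getVert_zero,
            SimpleGraph.Walk.getVert_cons_succ] using heq.symm
        · simp only [SimpleGraph.Walk.length_cons] at ht; omega
    | succ s =>
      cases t with
      | zero =>
        exfalso
        apply hu
        rw [SimpleGraph.Walk.mem_support_iff_exists_getVert]
        refine ⟨s, ?_, ?_⟩
        · simpa [SimpleGraph.Walk.getVert_zero,
            SimpleGraph.Walk.getVert_cons_succ] using heq
        · simp only [SimpleGraph.Walk.length_cons] at hs; omega
      | succ t =>
        simp only [SimpleGraph.Walk.getVert_cons_succ] at heq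
        simp only [SimpleGraph.Walk.length_cons] at hs ht
        have := ihq hq s (by omega) t (by omega) heq
        omega

/-- Let `y` be a basic covector graph with distinguished direction `δ`, support
`D ∪ {δ}` and basis `N`.  In the tree induced by `y` on `(D ∪ {δ}) ⊔ N`, the
edges along the unique path from `δ` to any other coordinate node of `D`
alternate between positive and negative, starting with a positive edge at `δ`. -/
theorem stmt_13 (d n : ℕ) (y : SimpleGraph (Fin d ⊕ Fin n)) [DecidableRel y.Adj]
    (σ : Fin n → Fin d → SignType)
    (δ : Fin d) (D : Finset (Fin d)) (hδD : δ ∉ D)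
    (N : Finset (Fin n)) (hcard : N.card = D.card)
    (hbip : ∀ u v, y.Adj u v →
      (∃ (i : Fin d) (j : Fin n), u = Sum.inl i ∧ v = Sum.inr j) ∨
      (∃ (i : Fin d) (j : Fin n), u = Sum.inr j ∧ v = Sum.inl i))
    (hsign : ∀ (i : Fin d) (j : Fin n), y.Adj (Sum.inl i) (Sum.inr j) → σ j i ≠ 0)
    (htrim : ∀ (j : Fin n) (i i' : Fin d), σ j i = -1 → σ j i' = -1 → i = i')
    (h1 : (y.induce ((Sum.inl '' (↑(insert δ D) : Set (Fin d))) ∪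
        (Sum.inr '' (↑N : Set (Fin n))))).IsTree)
    (h2 : ∀ i : Fin d, i ∉ insert δ D → ∀ v, ¬ y.Adj (Sum.inl i) v)
    (h3 : ∀ j ∈ N, y.degree (Sum.inr j) = 2)
    (h4 : ∀ j ∈ N, y.Adj (Sum.inl δ) (Sum.inr j) → σ j δ ≠ -1)
    (h5 : ∀ j ∈ N, (∃ i, y.Adj (Sum.inl i) (Sum.inr j) ∧ σ j i = 1) ∧
      (∃ i, y.Adj (Sum.inl i) (Sum.inr j) ∧ σ j i = -1))
    (h6 : ∀ (i i' : Fin d) (j j' : Fin n), j ∈ N → j' ∈ N →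
      y.Adj (Sum.inl i) (Sum.inr j) → σ j i = -1 →
      y.Adj (Sum.inl i') (Sum.inr j') → σ j' i' = -1 →
      (i = i' ∨ j = j') → i = i' ∧ j = j') :
    ∀ i ∈ D, ∀ p : y.Walk (Sum.inl δ) (Sum.inl i), p.IsPath →
      (∀ v ∈ p.support, v ∈ (Sum.inl '' (↑(insert δ D) : Set (Fin d))) ∪
        (Sum.inr '' (↑N : Set (Fin n)))) →
      ∀ t, t < p.length → ∀ (a : Fin d) (b : Fin n),
        ((p.getVert t = Sum.inl a ∧ p.getVert (t + 1) = Sum.inr b) ∨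
          (p.getVert t = Sum.inr b ∧ p.getVert (t + 1) = Sum.inl a)) →
        (Even t → σ b a = 1) ∧ (¬ Even t → σ b a = -1) := by
  intro i hi p hp hsupp
  have hadj : ∀ t, t < p.length → y.Adj (p.getVert t) (p.getVert (t + 1)) :=
    fun t ht => p.adj_getVert_succ ht
  have hmemN : ∀ t (b : Fin n), t ≤ p.length → p.getVert t = Sum.inr b → b ∈ N := by
    intro t b ht hb
    have hmem : (Sum.inr b : Fin d ⊕ Fin n) ∈ p.support := by
      rw [SimpleGraph.Walk.mem_support_iff_exists_getVert]
      exact ⟨t, hb, ht⟩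
    rcases hsupp _ hmem with ⟨x, _, hx⟩ | ⟨x, hxN, hx⟩
    · exact absurd hx (by simp)
    · rw [Sum.inr.injEq] at hx; exact hx ▸ hxN
  have hpar : ∀ t, t ≤ p.length →
      (Even t → ∃ a, p.getVert t = Sum.inl a) ∧
      (¬ Even t → ∃ b, p.getVert t = Sum.inr b) := by
    intro t
    induction t with
    | zero =>
      intro _
      exact ⟨fun _ => ⟨δ, p.getVert_zero⟩, fun h => absurd Even.zero h⟩
    | succ t ih =>
      intro ht
      have ht' : t < p.length := ht
      obtain ⟨hl, hr⟩ := ih ht'.le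
      have hadjt := hadj t ht'
      constructor
      · intro he
        have hot : ¬ Even t := by rw [Nat.even_add_one] at he; exact he
        obtain ⟨b, hb⟩ := hr hot
        rcases hbip _ _ hadjt with ⟨i', j', h1', _⟩ | ⟨i', j', _, h2'⟩
        · rw [hb] at h1'; exact absurd h1' (by simp)
        · exact ⟨i', h2'⟩
      · intro he
        have het : Even t := by rw [Nat.even_add_one, not_not] at he; exact he
        obtain ⟨a, ha⟩ := hl het
        rcases hbip _ _ hadjt with ⟨i', j', _, h2'⟩ | ⟨i', j', h1', _⟩
        · exact ⟨j', h2'⟩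
        · rw [ha] at h1'; exact absurd h1' (by simp)
  have hinj := aux_getVert_inj p hp
  intro t
  induction t with
  | zero =>
    intro ht a b hedge
    have h0 : p.getVert 0 = Sum.inl δ := p.getVert_zero
    rcases hedge with ⟨ha, hb⟩ | ⟨hb, _⟩
    · rw [h0] at ha
      have haδ : δ = a := by rwa [Sum.inl.injEq] at ha
      subst haδ
      have hbN : b ∈ N := hmemN 1 b (by omega) hb
      have hadj0 : y.Adj (Sum.inl δ) (Sum.inr b) := by
        have := hadj 0 ht; rwa [h0, hb] at this
      have hs := hsign δ b hadj0
      have h4' := h4 b hbN hadj0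
      refine ⟨fun _ => ?_, fun h => absurd Even.zero h⟩
      cases hv : σ b δ
      · exact absurd hv hs
      · exact absurd (by rw [hv]; rfl) h4'
      · decide
    · rw [h0] at hb; exact absurd hb (by simp)
  | succ t ih =>
    intro ht a b hedge
    have htlen : t < p.length := Nat.lt_of_succ_lt ht
    have hadjt := hadj t htlen
    have hadjt1 := hadj (t + 1) ht
    by_cases he : Even (t + 1)
    · have hot : ¬ Even t := by rw [Nat.even_add_one] at he; exact he
      obtain ⟨b₀, hb₀⟩ := (hpar t htlen.le).2 hot
      obtain ⟨a', ha'⟩ := (hpar (t + 1) ht.le).1 he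
      rcases hedge with ⟨ha, hb⟩ | ⟨hb, ha⟩
      · have hIH : σ b₀ a = -1 := (ih htlen a b₀ (Or.inr ⟨hb₀, ha⟩)).2 hot
        have hbN : b ∈ N := hmemN (t + 2) b (by omega) hb
        have hb₀N : b₀ ∈ N := hmemN t b₀ (by omega) hb₀
        have hadjA : y.Adj (Sum.inl a) (Sum.inr b) := by rwa [ha, hb] at hadjt1
        have hadjA0 : y.Adj (Sum.inl a) (Sum.inr b₀) := by
          rw [hb₀, ha] at hadjt; exact hadjt.symm
        have hne : b₀ ≠ b := by
          intro hq
          have : t = t + 2 := hinj t (by omega) (t + 2) (by omega)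
            (by rw [hb₀, hb, hq])
          omega
        have hs := hsign a b hadjA
        refine ⟨fun _ => ?_, fun h => absurd he h⟩
        by_contra hσ
        have hneg : σ b a = -1 := by
          cases hv : σ b a
          · exact absurd hv hs
          · decide
          · exact absurd (by rw [hv]; rfl) hσ
        exact hne (h6 a a b₀ b hb₀N hbN hadjA0 hIH hadjA hneg (Or.inl rfl)).2
      · rw [ha'] at hb; exact absurd hb (by simp)
    · have het : Even t := by rw [Nat.even_add_one, not_not] at he; exact he
      obtain ⟨a₀, ha₀⟩ := (hpar t htlen.le).1 het
      obtain ⟨b', hb'⟩ := (hpar (t + 1) ht.le).2 he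
      rcases hedge with ⟨ha, hb⟩ | ⟨hb, ha⟩
      · rw [hb'] at ha; exact absurd ha (by simp)
      · have hIH : σ b a₀ = 1 := (ih htlen a₀ b (Or.inl ⟨ha₀, hb⟩)).1 het
        have hbN : b ∈ N := hmemN (t + 1) b (by omega) hb
        have hadjA0 : y.Adj (Sum.inl a₀) (Sum.inr b) := by rwa [ha₀, hb] at hadjt
        have hadjA : y.Adj (Sum.inl a) (Sum.inr b) := by
          rw [hb, ha] at hadjt1; exact hadjt1.symm
        have hne : a₀ ≠ a := by
          intro hq
          have : t = t + 2 := hinj t (by omega) (t + 2) (by omega)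
            (by rw [ha₀, ha, hq])
          omega
        obtain ⟨_, ⟨i', hi'adj, hi'neg⟩⟩ := h5 b hbN
        have hdeg : (y.neighborFinset (Sum.inr b)).card = 2 := h3 b hbN
        have hi'a : i' = a := by
          by_contra hia
          have hia0 : i' ≠ a₀ := by
            intro hq; rw [hq, hIH] at hi'neg; exact absurd hi'neg (by decide)
          have hsub : ({Sum.inl a₀, Sum.inl a, Sum.inl i'} :
              Finset (Fin d ⊕ Fin n)) ⊆ y.neighborFinset (Sum.inr b) := by
            intro x hx
            simp only [Finset.mem_insert, Finset.mem_singleton] at hx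
            rw [SimpleGraph.mem_neighborFinset]
            rcases hx with rfl | rfl | rfl
            · exact hadjA0.symm
            · exact hadjA.symm
            · exact hi'adj.symm
          have h1c : (Sum.inl a₀ : Fin d ⊕ Fin n) ∉
              ({Sum.inl a, Sum.inl i'} : Finset (Fin d ⊕ Fin n)) := by
            simp [hne, Ne.symm hia0]
          have h2c : (Sum.inl a : Fin d ⊕ Fin n) ∉
              ({Sum.inl i'} : Finset (Fin d ⊕ Fin n)) := by
            simp [Ne.symm hia]
          have hc : ({Sum.inl a₀, Sum.inl a, Sum.inl i'} :
              Finset (Fin d ⊕ Fin n)).card = 3 := by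
            rw [Finset.card_insert_of_notMem h1c,
              Finset.card_insert_of_notMem h2c, Finset.card_singleton]
          have hle := Finset.card_le_card hsub
          rw [hc, hdeg] at hle
          omega
        rw [hi'a] at hi'neg
        exact ⟨fun hcon => absurd hcon he, fun _ => hi'neg⟩
end

section
/- Let G be a connected bipartite graph on [d] ⊔ [n] that is the covector graph of some point with respect to a matrix A ∈ ℝ^{n×d}, let δ ∈ [d], and for each i ∈ [d] let δ = i_1, j_1, i_2, ..., i_s, j_s, i_{s+1} = i be a path from δ to i in G. Then any point x ∈ ℝ^d whose covector graph is G satisfies x_i − x_δ = Σ_{t=1}^s a_{j_t i_t} − Σ_{t=1}^s a_{j_t i_{t+1}}. -/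
/-- Let `x ∈ ℝ^d` and let `δ = i_1, j_1, i_2, …, i_s, j_s, i_{s+1} = i` be a path
in the covector graph `G_A(x)` (each consecutive pair being an edge, i.e.
attaining the minimum of its row).  Then
`x_i − x_δ = Σ_t a_{j_t i_t} − Σ_t a_{j_t i_{t+1}}`. -/
theorem stmt_15 (n d : ℕ) (A : Fin n → Fin d → ℝ) (x : Fin d → ℝ)
    (δ i : Fin d) (s : ℕ)
    (iseq : Fin (s + 1) → Fin d) (jseq : Fin s → Fin n)
    (h0 : iseq 0 = δ) (hlast : iseq (Fin.last s) = i)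
    (hinj_i : Function.Injective iseq) (hinj_j : Function.Injective jseq)
    (hedge1 : ∀ t : Fin s, ∀ l : Fin d,
      A (jseq t) (iseq t.castSucc) + x (iseq t.castSucc) ≤ A (jseq t) l + x l)
    (hedge2 : ∀ t : Fin s, ∀ l : Fin d,
      A (jseq t) (iseq t.succ) + x (iseq t.succ) ≤ A (jseq t) l + x l) :
    x i - x δ =
      (∑ t : Fin s, A (jseq t) (iseq t.castSucc)) -
        ∑ t : Fin s, A (jseq t) (iseq t.succ) := by
  have key : ∀ t : Fin s,
      x (iseq t.succ) - x (iseq t.castSucc)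
        = A (jseq t) (iseq t.castSucc) - A (jseq t) (iseq t.succ) := by
    intro t
    have h1 := hedge1 t (iseq t.succ)
    have h2 := hedge2 t (iseq t.castSucc)
    linarith
  set f : ℕ → ℝ := fun k => x (iseq ⟨min k s, by omega⟩) with hf
  have tele : ∑ k ∈ Finset.range s, (f (k + 1) - f k) = f s - f 0 :=
    Finset.sum_range_sub f s
  have hfs : f s = x i := by
    simp [hf, Fin.last] at hlast ⊢
    rw [hlast]
  have hf0 : f 0 = x δ := by
    simpa [hf] using congrArg x h0
  have sum_eq : ∑ t : Fin s,
      (A (jseq t) (iseq t.castSucc) - A (jseq t) (iseq t.succ))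
        = ∑ t : Fin s, (x (iseq t.succ) - x (iseq t.castSucc)) := by
    exact (Finset.sum_congr rfl (fun t _ => (key t).symm))
  rw [← Finset.sum_sub_distrib, sum_eq]
  have : ∑ t : Fin s, (x (iseq t.succ) - x (iseq t.castSucc))
      = ∑ k ∈ Finset.range s, (f (k + 1) - f k) := by
    rw [Finset.sum_range fun k => f (k + 1) - f k]
    apply Finset.sum_congr rfl
    intro t _
    have h1 : (⟨min ((t : ℕ) + 1) s, by omega⟩ : Fin (s + 1)) = t.succ := by
      ext; simp [Nat.min_eq_left (Nat.succ_le_of_lt t.isLt)]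
    have h2 : (⟨min (t : ℕ) s, by omega⟩ : Fin (s + 1)) = t.castSucc := by
      ext; simp [Nat.min_eq_left (le_of_lt t.isLt)]
    simp only [hf, h1, h2]
  rw [this, tele, hfs, hf0]
end

section
/- Let (V ⊔ U, 𝒜, ω) be an AND-OR network with weights ω : 𝒜 → ℚ. If t ∈ (ℝ∪{∞})^{V⊔U} satisfies the constraints t_v ≥ max_{(u,v)∈𝒜}(t_u + ω(u,v)) for all v ∈ V and t_u ≥ min_{(v,u)∈𝒜}(t_v + ω(v,u)) for all u ∈ U, then the restriction (t_v)_{v∈V} satisfies, for every u ∈ U: min_{(u,v)∈𝒜}(t_v − ω(u,v)) ≥ min_{(v,u)∈𝒜}(t_v + ω(v,u)). Conversely, if (t_v)_{v∈V} satisfies the latter inequalities, then setting t_u = min_{(v,u)∈𝒜}(t_v + ω(v,u)) for each u ∈ U yields a point satisfying the original constraints. -/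
/-!
The AND constraints on `v` read `t_u ≤ t_v - ω(u,v)` for each arc `(u,v)`, i.e. `t_u` is a lower
bound of `min_{(u,v)} (t_v - ω(u,v))`; the OR constraint says `t_u` is an upper bound of
`min_{(v,u)} (t_v + ω(v,u))`. Eliminating `t_u` leaves exactly the inequality between the two
minima, and the smallest admissible choice of `t_u` recovers a feasible point. In `WithTop ℝ`
adding a finite weight is an order isomorphism, which makes the manipulation exact also at `∞`.
-/

namespace WithTop

theorem le_add_coe_neg_iff {α : Type*} [AddCommGroup α] [PartialOrder α] [IsOrderedAddMonoid α]
    (a b : WithTop α) (c : α) : a ≤ b + ((-c : α) : WithTop α) ↔ a + c ≤ b := by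
  rw [← WithTop.add_le_add_iff_right (coe_ne_top (a := c)), add_assoc, ← coe_add, neg_add_cancel,
    coe_zero, add_zero]

theorem le_inf_add_coe_neg_iff {α ι : Type*} [AddCommGroup α] [Lattice α] [IsOrderedAddMonoid α]
    (s : Finset ι) (f : ι → WithTop α) (w : ι → α) (t : WithTop α) :
    t ≤ s.inf (fun i => f i + ((-w i : α) : WithTop α)) ↔ ∀ i ∈ s, t + w i ≤ f i := by
  simp only [Finset.le_inf_iff, le_add_coe_neg_iff]

end WithTop

theorem stmt_19_general (V U : Type) [Fintype V]
    (AVU : V → U → Prop) (AUV : U → V → Prop)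
    [∀ v u, Decidable (AVU v u)] [∀ u v, Decidable (AUV u v)]
    (ωVU : V → U → ℚ) (ωUV : U → V → ℚ) :
    (∀ (tV : V → WithTop ℝ) (tU : U → WithTop ℝ),
      (∀ v u, AUV u v → tU u + ((ωUV u v : ℝ) : WithTop ℝ) ≤ tV v) →
      (∀ u, ((Finset.univ.filter fun v => AVU v u).inf fun v =>
          tV v + ((ωVU v u : ℝ) : WithTop ℝ)) ≤ tU u) →
      ∀ u, ((Finset.univ.filter fun v => AVU v u).inf fun v =>
          tV v + ((ωVU v u : ℝ) : WithTop ℝ)) ≤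
        ((Finset.univ.filter fun v => AUV u v).inf fun v =>
          tV v + ((-(ωUV u v : ℝ) : ℝ) : WithTop ℝ))) ∧
    (∀ tV : V → WithTop ℝ,
      (∀ u, ((Finset.univ.filter fun v => AVU v u).inf fun v =>
          tV v + ((ωVU v u : ℝ) : WithTop ℝ)) ≤
        ((Finset.univ.filter fun v => AUV u v).inf fun v =>
          tV v + ((-(ωUV u v : ℝ) : ℝ) : WithTop ℝ))) →
      ∀ tU : U → WithTop ℝ,
        (∀ u, tU u = ((Finset.univ.filter fun v => AVU v u).inf fun v =>
          tV v + ((ωVU v u : ℝ) : WithTop ℝ))) →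
        (∀ v u, AUV u v → tU u + ((ωUV u v : ℝ) : WithTop ℝ) ≤ tV v) ∧
        (∀ u, ((Finset.univ.filter fun v => AVU v u).inf fun v =>
            tV v + ((ωVU v u : ℝ) : WithTop ℝ)) ≤ tU u)) := by
  constructor
  · intro tV tU hAND hOR u
    refine (WithTop.le_inf_add_coe_neg_iff (α := ℝ) _ _ _ _).2 fun v hv => ?_
    exact (add_le_add_left (hOR u) _).trans (hAND v u (Finset.mem_filter.1 hv).2)
  · intro tV hineq tU htU
    refine ⟨fun v u hvu => ?_, fun u => (htU u).ge⟩
    rw [htU u]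
    exact (WithTop.le_inf_add_coe_neg_iff (α := ℝ) _ _ _ _).1 (hineq u) v (by simp [hvu])

/-- Theorem on AND-OR networks.  The network is a bipartite directed graph on
`V ⊔ U` with arc relations `AVU : V → U → Prop`, `AUV : U → V → Prop` (at most
one arc between any pair) and rational weights `ωVU`, `ωUV` on the arcs.  A
vector of starting times `(tV, tU)` in `(ℝ ∪ {∞})^{V ⊔ U}` is feasible when
`t_v ≥ max_{(u,v) ∈ 𝒜} (t_u + ω(u,v))` for all `v ∈ V` (AND) and
`t_u ≥ min_{(v,u) ∈ 𝒜} (t_v + ω(v,u))` for all `u ∈ U` (OR).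
First part: if `(tV, tU)` is feasible then `tV` satisfies, for every `u ∈ U`,
`min_{(v,u) ∈ 𝒜} (t_v + ω(v,u)) ≤ min_{(u,v) ∈ 𝒜} (t_v − ω(u,v))`.
Second part: conversely, if `tV` satisfies these inequalities, then setting
`t_u = min_{(v,u) ∈ 𝒜} (t_v + ω(v,u))` yields a feasible point `(tV, tU)`. -/
theorem stmt_19 (V U : Type) [Fintype V] [Fintype U]
    (AVU : V → U → Prop) (AUV : U → V → Prop)
    [∀ v u, Decidable (AVU v u)] [∀ u v, Decidable (AUV u v)]
    (hexcl : ∀ v u, ¬ (AVU v u ∧ AUV u v))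
    (ωVU : V → U → ℚ) (ωUV : U → V → ℚ) :
    (∀ (tV : V → WithTop ℝ) (tU : U → WithTop ℝ),
      (∀ v u, AUV u v → tU u + ((ωUV u v : ℝ) : WithTop ℝ) ≤ tV v) →
      (∀ u, ((Finset.univ.filter fun v => AVU v u).inf fun v =>
          tV v + ((ωVU v u : ℝ) : WithTop ℝ)) ≤ tU u) →
      ∀ u, ((Finset.univ.filter fun v => AVU v u).inf fun v =>
          tV v + ((ωVU v u : ℝ) : WithTop ℝ)) ≤
        ((Finset.univ.filter fun v => AUV u v).inf fun v =>
          tV v + ((-(ωUV u v : ℝ) : ℝ) : WithTop ℝ))) ∧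
    (∀ tV : V → WithTop ℝ,
      (∀ u, ((Finset.univ.filter fun v => AVU v u).inf fun v =>
          tV v + ((ωVU v u : ℝ) : WithTop ℝ)) ≤
        ((Finset.univ.filter fun v => AUV u v).inf fun v =>
          tV v + ((-(ωUV u v : ℝ) : ℝ) : WithTop ℝ))) →
      ∀ tU : U → WithTop ℝ,
        (∀ u, tU u = ((Finset.univ.filter fun v => AVU v u).inf fun v =>
          tV v + ((ωVU v u : ℝ) : WithTop ℝ))) →
        (∀ v u, AUV u v → tU u + ((ωUV u v : ℝ) : WithTop ℝ) ≤ tV v) ∧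
        (∀ u, ((Finset.univ.filter fun v => AVU v u).inf fun v =>
            tV v + ((ωVU v u : ℝ) : WithTop ℝ)) ≤ tU u)) :=
  stmt_19_general V U AVU AUV ωVU ωUV
end
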